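/- Let 0<α<1, β>0 with α+1/β≥1, and let φ be a quasiconcave function on [0,1). Define ψ(t) := t · sup_{t<s<1} φ(s^{1/β}) s^{α−1} for t∈(0,1), ψ(0)=0. Then ψ is quasiconcave on [0,1), ψ(t) ≥ t^{α} φ(t^{1/β}) for all t∈(0,1), and ψ is (up to equality, not merely equivalence) the smallest such function: if η is any quasiconcave function on [0,1) with η(t) ≥ t^{α} φ(t^{1/β}) for all t∈(0,1), then ψ(t) ≤ η(t) for all t∈(0,1). -/

import Mathlib

open MeasureTheory Filter Set Real Topology
open scoped ENNReal

noncomputable section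

/-- A quasiconcave function on `[0,1)`: it vanishes exactly at `0`, is nonnegative and
nondecreasing, and `t ↦ φ(t)/t` is nonincreasing on `(0,1)`. -/
def QuasiconcaveOn01 (φ : ℝ → ℝ) : Prop :=
  φ 0 = 0 ∧ (∀ t ∈ Set.Ioo (0:ℝ) 1, 0 < φ t) ∧
  (∀ t ∈ Set.Ico (0:ℝ) 1, 0 ≤ φ t) ∧
  MonotoneOn φ (Set.Ioo 0 1) ∧
  AntitoneOn (fun t => φ t / t) (Set.Ioo 0 1)

/-- `ψ(t) = t ⬝ sup_{t<s<1} φ(s^{1/β}) s^{α-1}` (with `ψ(0) = 0`). -/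
def psiFun (α β : ℝ) (φ : ℝ → ℝ) (t : ℝ) : ℝ :=
  t * sSup ((fun s => φ (s ^ (1/β)) * s ^ (α - 1)) '' Set.Ioo t 1)

/-!
Write `h(s) = s^α φ(s^{1/β})` and `g(s) = h(s)/s`, so that `ψ(t) = t ⬝ sup_{t<s<1} g(s)`.
For any nondecreasing positive `h` on `(0,1)`, the function `t ↦ t ⬝ sup_{t<s<1} h(s)/s` is the
least quasiconcave majorant of `h`: the supremum makes `ψ(t)/t` nonincreasing, monotonicity of `h`
makes `ψ` nondecreasing and `ψ ≥ h`, and a quasiconcave `η ≥ h` satisfies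
`h(s)/s ≤ η(s)/s ≤ η(t)/t` for `t < s`. Here `h` is nondecreasing because `α ≥ 0`, and the supremum
is finite because a quasiconcave `φ` is bounded on `[u,1)` by `φ(u)/u`.
-/

/-- The least quasiconcave majorant of `s ↦ s * g s`. -/
def quasiconcaveMajorant (g : ℝ → ℝ) (t : ℝ) : ℝ :=
  t * sSup (g '' Ioo t 1)

namespace quasiconcaveMajorant

variable {g : ℝ → ℝ} {t : ℝ}

lemma zero : quasiconcaveMajorant g 0 = 0 :=
  zero_mul _

lemma div_self_eq (ht : t ≠ 0) : quasiconcaveMajorant g t / t = sSup (g '' Ioo t 1) :=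
  mul_div_cancel_left₀ _ ht

lemma mul_le (hbdd : BddAbove (g '' Ioo t 1))
    (hmono : MonotoneOn (fun s => s * g s) (Ioo 0 1)) (ht : t ∈ Ioo 0 1) :
    t * g t ≤ quasiconcaveMajorant g t := by
  have hlim : Tendsto (fun s => s * sSup (g '' Ioo t 1)) (𝓝[>] t)
      (𝓝 (quasiconcaveMajorant g t)) :=
    tendsto_nhdsWithin_of_tendsto_nhds ((continuous_mul_const _).tendsto t)
  refine ge_of_tendsto hlim ?_
  filter_upwards [Ioo_mem_nhdsGT ht.2] with s hs
  have hs0 : 0 < s := ht.1.trans hs.1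
  calc t * g t ≤ s * g s := hmono ht ⟨hs0, hs.2⟩ hs.1.le
    _ ≤ s * sSup (g '' Ioo t 1) :=
      mul_le_mul_of_nonneg_left (le_csSup hbdd (mem_image_of_mem g hs)) hs0.le

lemma monotoneOn (hbdd : ∀ t ∈ Ioo (0:ℝ) 1, BddAbove (g '' Ioo t 1))
    (hmono : MonotoneOn (fun s => s * g s) (Ioo 0 1)) (hg : ∀ s ∈ Ioo (0:ℝ) 1, 0 ≤ g s) :
    MonotoneOn (quasiconcaveMajorant g) (Ioo 0 1) := by
  intro t₁ ht₁ t₂ ht₂ h₁₂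
  rw [quasiconcaveMajorant, ← le_div_iff₀' ht₁.1]
  refine csSup_le ((nonempty_Ioo.mpr ht₁.2).image g) ?_
  rintro _ ⟨s, hs, rfl⟩
  have hs₀ : s ∈ Ioo (0:ℝ) 1 := ⟨ht₁.1.trans hs.1, hs.2⟩
  rw [le_div_iff₀' ht₁.1]
  rcases le_or_gt s t₂ with hst | hts
  · calc t₁ * g s ≤ s * g s := mul_le_mul_of_nonneg_right hs.1.le (hg s hs₀)
      _ ≤ t₂ * g t₂ := hmono hs₀ ht₂ hst
      _ ≤ quasiconcaveMajorant g t₂ := mul_le (hbdd t₂ ht₂) hmono ht₂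
  · calc t₁ * g s ≤ t₂ * g s := mul_le_mul_of_nonneg_right h₁₂ (hg s hs₀)
      _ ≤ quasiconcaveMajorant g t₂ := mul_le_mul_of_nonneg_left
          (le_csSup (hbdd t₂ ht₂) (mem_image_of_mem g ⟨hts, hs.2⟩)) ht₂.1.le

lemma div_antitoneOn (hbdd : ∀ t ∈ Ioo (0:ℝ) 1, BddAbove (g '' Ioo t 1)) :
    AntitoneOn (fun t => quasiconcaveMajorant g t / t) (Ioo 0 1) := by
  intro t₁ ht₁ t₂ ht₂ h₁₂
  simp only [div_self_eq ht₁.1.ne', div_self_eq ht₂.1.ne']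
  exact csSup_le_csSup (hbdd t₁ ht₁) ((nonempty_Ioo.mpr ht₂.2).image g)
    (image_mono (Ioo_subset_Ioo_left h₁₂))

lemma quasiconcaveOn01 (hbdd : ∀ t ∈ Ioo (0:ℝ) 1, BddAbove (g '' Ioo t 1))
    (hmono : MonotoneOn (fun s => s * g s) (Ioo 0 1)) (hg : ∀ s ∈ Ioo (0:ℝ) 1, 0 < g s) :
    QuasiconcaveOn01 (quasiconcaveMajorant g) := by
  have hpos : ∀ t ∈ Ioo (0:ℝ) 1, 0 < quasiconcaveMajorant g t := fun t ht =>
    (mul_pos ht.1 (hg t ht)).trans_le (mul_le (hbdd t ht) hmono ht)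
  refine ⟨zero, hpos, ?_, monotoneOn hbdd hmono fun s hs => (hg s hs).le, div_antitoneOn hbdd⟩
  rintro t ⟨ht₀, ht₁⟩
  rcases ht₀.eq_or_lt with rfl | ht₀
  · exact zero.ge
  · exact (hpos t ⟨ht₀, ht₁⟩).le

lemma le {η : ℝ → ℝ} (hη : AntitoneOn (fun t => η t / t) (Ioo 0 1))
    (hle : ∀ s ∈ Ioo (0:ℝ) 1, s * g s ≤ η s) (ht : t ∈ Ioo 0 1) :
    quasiconcaveMajorant g t ≤ η t := by
  rw [quasiconcaveMajorant, ← le_div_iff₀' ht.1]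
  refine csSup_le ((nonempty_Ioo.mpr ht.2).image g) ?_
  rintro _ ⟨s, hs, rfl⟩
  have hs₀ : s ∈ Ioo (0:ℝ) 1 := ⟨ht.1.trans hs.1, hs.2⟩
  calc g s ≤ η s / s := (le_div_iff₀' hs₀.1).mpr (hle s hs₀)
    _ ≤ η t / t := hη ht hs₀ hs.1.le

end quasiconcaveMajorant

namespace QuasiconcaveOn01

variable {φ : ℝ → ℝ}

lemma pos (hφ : QuasiconcaveOn01 φ) : ∀ t ∈ Ioo (0:ℝ) 1, 0 < φ t :=
  hφ.2.1

lemma monotoneOn (hφ : QuasiconcaveOn01 φ) : MonotoneOn φ (Ioo 0 1) :=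
  hφ.2.2.2.1

lemma antitoneOn_div (hφ : QuasiconcaveOn01 φ) : AntitoneOn (fun t => φ t / t) (Ioo 0 1) :=
  hφ.2.2.2.2

lemma le_div_of_le (hφ : QuasiconcaveOn01 φ) {u x : ℝ} (hu : u ∈ Ioo (0:ℝ) 1) (hux : u ≤ x)
    (hx : x < 1) : φ x ≤ φ u / u := by
  have hx₀ : x ∈ Ioo (0:ℝ) 1 := ⟨hu.1.trans_le hux, hx⟩
  calc φ x ≤ φ x / x := le_div_self (hφ.pos x hx₀).le hx₀.1 hx.le
    _ ≤ φ u / u := hφ.antitoneOn_div hu hx₀ hux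

end QuasiconcaveOn01

lemma rpow_mem_Ioo_zero_one {s r : ℝ} (hs : s ∈ Ioo (0:ℝ) 1) (hr : 0 < r) :
    s ^ r ∈ Ioo (0:ℝ) 1 :=
  ⟨rpow_pos_of_pos hs.1 r, rpow_lt_one hs.1.le hs.2 hr⟩

section PsiFun

variable {α β : ℝ} {φ : ℝ → ℝ}

lemma psiFun_eq_quasiconcaveMajorant :
    psiFun α β φ = quasiconcaveMajorant (fun s => φ (s ^ (1/β)) * s ^ (α - 1)) :=
  rfl

lemma mul_rpow_sub_one_mul {s : ℝ} (hs : 0 < s) (c : ℝ) :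
    s * (c * s ^ (α - 1)) = s ^ α * c := by
  rw [rpow_sub_one hs.ne']
  field_simp

lemma monotoneOn_rpow_mul_comp_rpow (hα : 0 ≤ α) (hβ : 0 < β) (hφ : QuasiconcaveOn01 φ) :
    MonotoneOn (fun s => s ^ α * φ (s ^ (1/β))) (Ioo 0 1) := by
  intro s hs t ht hst
  have hφs := rpow_mem_Ioo_zero_one hs (one_div_pos.mpr hβ)
  have hφt := rpow_mem_Ioo_zero_one ht (one_div_pos.mpr hβ)
  exact mul_le_mul (rpow_le_rpow hs.1.le hst hα)
    (hφ.monotoneOn hφs hφt (rpow_le_rpow hs.1.le hst (one_div_pos.mpr hβ).le))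
    (hφ.pos _ hφs).le (rpow_nonneg ht.1.le α)

lemma bddAbove_image_psiFun_integrand (hα : 0 ≤ α) (hβ : 0 < β) (hφ : QuasiconcaveOn01 φ)
    {t : ℝ} (ht : t ∈ Ioo (0:ℝ) 1) :
    BddAbove ((fun s => φ (s ^ (1/β)) * s ^ (α - 1)) '' Ioo t 1) := by
  have hu := rpow_mem_Ioo_zero_one ht (one_div_pos.mpr hβ)
  refine ⟨φ (t ^ (1/β)) / t ^ (1/β) / t, ?_⟩
  rintro _ ⟨s, hs, rfl⟩
  have hs₀ : 0 < s := ht.1.trans hs.1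
  have hv := rpow_mem_Ioo_zero_one ⟨hs₀, hs.2⟩ (one_div_pos.mpr hβ)
  have hφs : φ (s ^ (1/β)) ≤ φ (t ^ (1/β)) / t ^ (1/β) :=
    hφ.le_div_of_le hu (rpow_le_rpow ht.1.le hs.1.le (one_div_pos.mpr hβ).le) hv.2
  calc φ (s ^ (1/β)) * s ^ (α - 1) = φ (s ^ (1/β)) * s ^ α / s := by
        rw [rpow_sub_one hs₀.ne', mul_div_assoc]
    _ ≤ φ (t ^ (1/β)) / t ^ (1/β) * 1 / t := by
        have hM : 0 ≤ φ (t ^ (1/β)) / t ^ (1/β) := div_nonneg (hφ.pos _ hu).le hu.1.le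
        exact div_le_div₀ (by simpa using hM) (mul_le_mul hφs (rpow_le_one hs₀.le hs.2.le hα)
          (rpow_nonneg hs₀.le α) hM) ht.1 hs.1.le
    _ = φ (t ^ (1/β)) / t ^ (1/β) / t := by rw [mul_one]

end PsiFun

theorem statement9_general (α β : ℝ) (hα : 0 < α) (hβ : 0 < β)
    (φ : ℝ → ℝ) (hφ : QuasiconcaveOn01 φ) :
    QuasiconcaveOn01 (psiFun α β φ) ∧
    (∀ t ∈ Set.Ioo (0:ℝ) 1, t ^ α * φ (t ^ (1/β)) ≤ psiFun α β φ t) ∧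
    (∀ η : ℝ → ℝ, QuasiconcaveOn01 η →
      (∀ t ∈ Set.Ioo (0:ℝ) 1, t ^ α * φ (t ^ (1/β)) ≤ η t) →
      ∀ t ∈ Set.Ioo (0:ℝ) 1, psiFun α β φ t ≤ η t) := by
  set g : ℝ → ℝ := fun s => φ (s ^ (1/β)) * s ^ (α - 1)
  have hg : ∀ s ∈ Ioo (0:ℝ) 1, s * g s = s ^ α * φ (s ^ (1/β)) := fun s hs =>
    mul_rpow_sub_one_mul hs.1 _
  have hbdd := fun t (ht : t ∈ Ioo (0:ℝ) 1) => bddAbove_image_psiFun_integrand hα.le hβ hφ ht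
  have hmono : MonotoneOn (fun s => s * g s) (Ioo 0 1) :=
    (monotoneOn_rpow_mul_comp_rpow hα.le hβ hφ).congr fun s hs => (hg s hs).symm
  have hgpos : ∀ s ∈ Ioo (0:ℝ) 1, 0 < g s := fun s hs =>
    mul_pos (hφ.pos _ (rpow_mem_Ioo_zero_one hs (one_div_pos.mpr hβ))) (rpow_pos_of_pos hs.1 _)
  rw [psiFun_eq_quasiconcaveMajorant]
  refine ⟨quasiconcaveMajorant.quasiconcaveOn01 hbdd hmono hgpos, fun t ht => ?_,
    fun η hη hηφ t ht => ?_⟩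
  · exact (hg t ht).symm.le.trans (quasiconcaveMajorant.mul_le (hbdd t ht) hmono ht)
  · exact quasiconcaveMajorant.le hη.antitoneOn_div (fun s hs => (hg s hs).le.trans (hηφ s hs)) ht

theorem statement9 (α β : ℝ) (hα : 0 < α) (hα1 : α < 1) (hβ : 0 < β)
    (hαβ : 1 ≤ α + 1 / β) (φ : ℝ → ℝ) (hφ : QuasiconcaveOn01 φ) :
    QuasiconcaveOn01 (psiFun α β φ) ∧
    (∀ t ∈ Set.Ioo (0:ℝ) 1, t ^ α * φ (t ^ (1/β)) ≤ psiFun α β φ t) ∧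
    (∀ η : ℝ → ℝ, QuasiconcaveOn01 η →
      (∀ t ∈ Set.Ioo (0:ℝ) 1, t ^ α * φ (t ^ (1/β)) ≤ η t) →
      ∀ t ∈ Set.Ioo (0:ℝ) 1, psiFun α β φ t ≤ η t) :=
  statement9_general α β hα hβ φ hφ
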